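/- Let p ≥ 2 and x ∈ EuclideanSpace ℝ (Fin p). Then ∫_{S^{p-1}} e^{⟨x,t⟩} dσ(t) = 2π^{p/2} · Σ_{k=0}^∞ ‖x‖^{2k} / (4^k · k! · Γ(p/2 + k)). -/

import Mathlib

/-!
Expand `exp ⟪x, t⟫` in its power series and integrate termwise over the (finite-measure) sphere.
The sphere moments `∫ ⟪x, t⟫ ^ k dσ` come from evaluating the Gaussian moment
`∫ ⟪x, y⟫ ^ k * exp (-‖y‖ ^ 2) dy` in two ways. In polar coordinates it is the sphere moment times
`∫₀^∞ r ^ (p - 1 + k) * exp (-r ^ 2) dr = Γ((p + k) / 2) / 2`. After a reflection moving `x` to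
`‖x‖ • eᵢ` it factors into one-dimensional Gaussian integrals, which vanish for odd `k` and give
`Γ(m + 1/2) = (2m)! √π / (4^m m!)` for `k = 2m`.
-/

open MeasureTheory Metric Set Real
open scoped RealInnerProductSpace

lemma integral_Ioi_pow_mul_exp_neg_sq (n : ℕ) :
    ∫ y in Ioi (0 : ℝ), y ^ n * exp (-y ^ 2) = Gamma ((n + 1) / 2) / 2 := by
  have h := integral_rpow_mul_exp_neg_rpow (p := 2) (q := n) two_pos
    (neg_one_lt_zero.trans_le n.cast_nonneg)
  norm_cast at h
  rw [h]
  push_cast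
  ring

lemma integral_pow_mul_exp_neg_sq_of_odd {k : ℕ} (hk : Odd k) :
    ∫ y : ℝ, y ^ k * exp (-y ^ 2) = 0 := by
  have h := integral_neg_eq_self (fun y : ℝ ↦ y ^ k * exp (-y ^ 2)) volume
  simp only [hk.neg_pow, even_two.neg_pow, neg_mul, integral_neg] at h
  linarith

lemma Gamma_nat_add_half_eq_factorial (m : ℕ) :
    Gamma (m + 1 / 2) = (2 * m).factorial * √π / (4 ^ m * m.factorial) := by
  have h := Gamma_mul_Gamma_add_half (m + 1 / 2)
  rw [show (m : ℝ) + 1 / 2 + 1 / 2 = m + 1 by ring, Gamma_nat_eq_factorial,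
    show 2 * ((m : ℝ) + 1 / 2) = (2 * m : ℕ) + 1 by push_cast; ring, Gamma_nat_eq_factorial,
    show (1 : ℝ) - ((2 * m : ℕ) + 1) = -(2 * m : ℕ) by ring, rpow_neg zero_le_two, rpow_natCast,
    pow_mul] at h
  rw [eq_div_iff (by positivity), mul_left_comm, h]
  norm_num
  field_simp

lemma integral_pow_two_mul_mul_exp_neg_sq (m : ℕ) :
    ∫ y : ℝ, y ^ (2 * m) * exp (-y ^ 2) = (2 * m).factorial * √π / (4 ^ m * m.factorial) := by
  have h := integral_comp_abs (f := fun y ↦ y ^ (2 * m) * exp (-y ^ 2))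
  simp only [sq_abs, (even_two_mul m).pow_abs] at h
  rw [h, integral_Ioi_pow_mul_exp_neg_sq, Nat.cast_mul, Nat.cast_two,
    show (2 * (m : ℝ) + 1) / 2 = m + 1 / 2 by ring, Gamma_nat_add_half_eq_factorial]
  ring

lemma integral_exp_eq_tsum {α : Type*} [MeasurableSpace α] {μ : Measure α} [IsFiniteMeasure μ]
    {f : α → ℝ} (hf : AEStronglyMeasurable f μ) {C : ℝ} (hC : ∀ᵐ a ∂μ, |f a| ≤ C) :
    ∫ a, exp (f a) ∂μ = ∑' k : ℕ, (∫ a, f a ^ k ∂μ) / k.factorial := by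
  have hbound : ∀ k : ℕ, ∀ᵐ a ∂μ, ‖f a ^ k / k.factorial‖ ≤ C ^ k / k.factorial := fun k ↦ by
    filter_upwards [hC] with a ha
    rw [norm_div, norm_pow, norm_eq_abs, RCLike.norm_natCast]
    gcongr
  simp_rw [exp_eq_exp_ℝ, NormedSpace.exp_eq_tsum_div, ← integral_div]
  refine (integral_tsum_of_summable_integral_norm
    (fun k ↦ Integrable.of_bound (by fun_prop) _ (hbound k)) ?_).symm
  refine Summable.of_nonneg_of_le (fun k ↦ integral_nonneg fun a ↦ norm_nonneg _) (fun k ↦ ?_)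
    ((summable_pow_div_factorial C).mul_right (μ.real univ))
  have h := norm_integral_le_of_norm_le_const (f := fun a ↦ ‖f a ^ k / k.factorial‖)
    (by simpa only [norm_norm] using hbound k)
  rwa [norm_of_nonneg (integral_nonneg fun a ↦ norm_nonneg _)] at h

lemma integral_comp_inner_norm_eq_of_norm_eq {E : Type*} [NormedAddCommGroup E]
    [InnerProductSpace ℝ E] [FiniteDimensional ℝ E] [MeasurableSpace E] [BorelSpace E]
    {x x' : E} (h : ‖x‖ = ‖x'‖) (F : ℝ → ℝ → ℝ) :
    ∫ y, F ⟪x, y⟫ ‖y‖ = ∫ y, F ⟪x', y⟫ ‖y‖ := by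
  set R := (ℝ ∙ (x - x'))ᗮ.reflection
  have hR : ∀ y, ⟪x, R y⟫ = ⟪x', y⟫ := fun y ↦ by
    rw [← R.inner_map_map, Submodule.reflection_sub h, Submodule.reflection_reflection]
  rw [← R.measurePreserving.integral_comp R.toHomeomorph.measurableEmbedding]
  simp only [hR, LinearIsometryEquiv.norm_map]

section Polar

variable {F : Type*} [NormedAddCommGroup F] [NormedSpace ℝ F]

lemma integral_volumeIoiPow (n : ℕ) (g : ℝ → F) :
    ∫ r, g r ∂(Measure.volumeIoiPow n) = ∫ y in Ioi (0 : ℝ), y ^ n • g y := by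
  simp only [Measure.volumeIoiPow, ENNReal.ofReal]
  rw [integral_withDensity_eq_integral_smul (measurable_subtype_coe.pow_const _).real_toNNReal,
    integral_subtype_comap measurableSet_Ioi (fun y ↦ (y ^ n).toNNReal • g y)]
  refine setIntegral_congr_fun measurableSet_Ioi fun y hy ↦ ?_
  rw [NNReal.smul_def, coe_toNNReal _ (pow_nonneg hy.le _)]

lemma integral_eq_integral_toSphere_prod {E : Type*} [NormedAddCommGroup E] [NormedSpace ℝ E]
    [FiniteDimensional ℝ E] [MeasurableSpace E] [BorelSpace E] [Nontrivial E]
    (μ : Measure E) [μ.IsAddHaarMeasure] (f : E → F) :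
    ∫ y, f y ∂μ = ∫ z : sphere (0 : E) 1 × Ioi (0 : ℝ), f ((z.2 : ℝ) • (z.1 : E))
      ∂(μ.toSphere.prod (Measure.volumeIoiPow (Module.finrank ℝ E - 1))) := by
  calc ∫ y, f y ∂μ = ∫ y in {0}ᶜ, f y ∂μ := by rw [restrict_compl_singleton]
    _ = ∫ y : ({0}ᶜ : Set E), f y ∂(μ.comap Subtype.val) :=
      (integral_subtype_comap (measurableSet_singleton _).compl _).symm
    _ = _ := by
      rw [← μ.measurePreserving_homeomorphUnitSphereProd.integral_comp
        (Homeomorph.measurableEmbedding _)]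
      congr 1 with y
      simp only [homeomorphUnitSphereProd_apply_fst_coe, homeomorphUnitSphereProd_apply_snd_coe]
      rw [smul_inv_smul₀ (norm_ne_zero_iff.2 y.2)]

end Polar

section GaussianMoments

variable {ι : Type*} [Fintype ι]

lemma integral_pow_apply_mul_exp_neg_norm_sq (i : ι) (k : ℕ) :
    ∫ y : EuclideanSpace ℝ ι, y i ^ k * exp (-‖y‖ ^ 2)
      = (∫ t : ℝ, t ^ k * exp (-t ^ 2)) * √π ^ (Fintype.card ι - 1) := by
  classical
  let g : ι → ℝ → ℝ := fun j t ↦ t ^ (if j = i then k else 0) * exp (-t ^ 2)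
  have hg : ∀ y : EuclideanSpace ℝ ι, y i ^ k * exp (-‖y‖ ^ 2) = ∏ j, g j (y j) := fun y ↦ by
    simp only [g, EuclideanSpace.norm_sq_eq, Finset.prod_mul_distrib, ← Finset.sum_neg_distrib,
      exp_sum, pow_ite, pow_zero, Finset.prod_ite_eq', Finset.mem_univ, if_true, norm_eq_abs,
      sq_abs]
  simp_rw [hg]
  rw [← (EuclideanSpace.volume_preserving_symm_measurableEquiv_toLp ι).symm.integral_comp
    (MeasurableEquiv.measurableEmbedding _)]
  simp only [MeasurableEquiv.symm_symm, MeasurableEquiv.toLp_apply]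
  rw [volume_pi, integral_fintype_prod_eq_prod, Fintype.prod_eq_mul_prod_compl i,
    Finset.prod_congr rfl (g := fun _ ↦ √π), Finset.prod_const, Finset.card_compl,
    Finset.card_singleton]
  · simp [g]
  · intro j hj
    have hji : j ≠ i := by simpa using hj
    simpa [g, hji] using integral_gaussian 1

variable [Nonempty ι]

lemma integral_inner_pow_mul_exp_neg_norm_sq (x : EuclideanSpace ℝ ι) (k : ℕ) :
    ∫ y : EuclideanSpace ℝ ι, ⟪x, y⟫ ^ k * exp (-‖y‖ ^ 2)
      = ‖x‖ ^ k * (∫ t : ℝ, t ^ k * exp (-t ^ 2)) * √π ^ (Fintype.card ι - 1) := by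
  classical
  obtain ⟨i⟩ := ‹Nonempty ι›
  have hnorm : ‖x‖ = ‖‖x‖ • EuclideanSpace.single i (1 : ℝ)‖ := by simp [norm_smul]
  rw [integral_comp_inner_norm_eq_of_norm_eq hnorm (fun s r ↦ s ^ k * exp (-r ^ 2))]
  simp only [real_inner_smul_left, EuclideanSpace.inner_single_left, map_one, one_mul, mul_pow,
    mul_assoc, integral_const_mul, integral_pow_apply_mul_exp_neg_norm_sq]

lemma integral_toSphere_inner_pow_mul_Gamma (x : EuclideanSpace ℝ ι) (k : ℕ) :
    (∫ t : sphere (0 : EuclideanSpace ℝ ι) 1, ⟪x, (t : EuclideanSpace ℝ ι)⟫ ^ k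
        ∂(volume : Measure (EuclideanSpace ℝ ι)).toSphere) * Gamma ((Fintype.card ι + k) / 2)
      = 2 * ‖x‖ ^ k * (∫ s : ℝ, s ^ k * exp (-s ^ 2)) * √π ^ (Fintype.card ι - 1) := by
  have hn : 1 ≤ Fintype.card ι := Fintype.card_pos
  have hradial : ∫ r in Ioi (0 : ℝ), r ^ (Fintype.card ι - 1) • (r ^ k * exp (-r ^ 2))
      = Gamma ((Fintype.card ι + k) / 2) / 2 := by
    simp_rw [smul_eq_mul, ← mul_assoc, ← pow_add, integral_Ioi_pow_mul_exp_neg_sq]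
    congr 2
    push_cast [hn]
    ring
  have hsplit : ∀ z : sphere (0 : EuclideanSpace ℝ ι) 1 × Ioi (0 : ℝ),
      ⟪x, (z.2 : ℝ) • (z.1 : EuclideanSpace ℝ ι)⟫ ^ k
          * exp (-‖(z.2 : ℝ) • (z.1 : EuclideanSpace ℝ ι)‖ ^ 2)
        = ⟪x, (z.1 : EuclideanSpace ℝ ι)⟫ ^ k * ((z.2 : ℝ) ^ k * exp (-(z.2 : ℝ) ^ 2)) := by
    rintro ⟨t, r⟩
    rw [real_inner_smul_right, norm_smul, norm_eq_abs, abs_of_pos r.2,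
      mem_sphere_zero_iff_norm.1 t.2, mul_one, mul_pow, mul_comm (_ ^ k), mul_assoc]
  have hpolar := integral_eq_integral_toSphere_prod volume
    (fun y : EuclideanSpace ℝ ι ↦ ⟪x, y⟫ ^ k * exp (-‖y‖ ^ 2))
  simp only [hsplit, finrank_euclideanSpace, integral_inner_pow_mul_exp_neg_norm_sq] at hpolar
  rw [integral_prod_mul
      (fun t : sphere (0 : EuclideanSpace ℝ ι) 1 ↦ ⟪x, (t : EuclideanSpace ℝ ι)⟫ ^ k)
      (fun r : Ioi (0 : ℝ) ↦ (r : ℝ) ^ k * exp (-(r : ℝ) ^ 2)),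
    integral_volumeIoiPow _ (fun r ↦ r ^ k * exp (-r ^ 2)), hradial] at hpolar
  linear_combination -2 * hpolar

lemma integral_toSphere_inner_pow_of_odd (x : EuclideanSpace ℝ ι) {k : ℕ} (hk : Odd k) :
    ∫ t : sphere (0 : EuclideanSpace ℝ ι) 1, ⟪x, (t : EuclideanSpace ℝ ι)⟫ ^ k
      ∂(volume : Measure (EuclideanSpace ℝ ι)).toSphere = 0 := by
  have h := integral_toSphere_inner_pow_mul_Gamma x k
  rw [integral_pow_mul_exp_neg_sq_of_odd hk, mul_zero, zero_mul, mul_eq_zero] at h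
  exact h.resolve_right (Gamma_pos_of_pos (by positivity)).ne'

lemma integral_toSphere_inner_pow_two_mul_div_factorial (x : EuclideanSpace ℝ ι) (m : ℕ) :
    (∫ t : sphere (0 : EuclideanSpace ℝ ι) 1, ⟪x, (t : EuclideanSpace ℝ ι)⟫ ^ (2 * m)
        ∂(volume : Measure (EuclideanSpace ℝ ι)).toSphere) / (2 * m).factorial
      = 2 * π ^ ((Fintype.card ι : ℝ) / 2) *
          (‖x‖ ^ (2 * m) / (4 ^ m * m.factorial * Gamma ((Fintype.card ι : ℝ) / 2 + m))) := by
  have hn : 1 ≤ Fintype.card ι := Fintype.card_pos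
  have h := integral_toSphere_inner_pow_mul_Gamma x (2 * m)
  rw [integral_pow_two_mul_mul_exp_neg_sq,
    show ((Fintype.card ι : ℝ) + (2 * m : ℕ)) / 2 = Fintype.card ι / 2 + m by push_cast; ring] at h
  have hpi : π ^ ((Fintype.card ι : ℝ) / 2) = √π * √π ^ (Fintype.card ι - 1) := by
    rw [← pow_succ', Nat.sub_add_cancel hn, sqrt_eq_rpow, ← rpow_natCast, ← rpow_mul pi_pos.le]
    ring_nf
  have hΓ : 0 < Gamma ((Fintype.card ι : ℝ) / 2 + m) := Gamma_pos_of_pos (by positivity)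
  rw [hpi, eq_div_of_mul_eq hΓ.ne' h]
  field_simp

end GaussianMoments

theorem stmt17 (p : ℕ) (hp : 2 ≤ p) (x : EuclideanSpace ℝ (Fin p)) :
    (∫ t : sphere (0 : EuclideanSpace ℝ (Fin p)) 1,
        Real.exp ⟪x, (t : EuclideanSpace ℝ (Fin p))⟫
        ∂(volume : Measure (EuclideanSpace ℝ (Fin p))).toSphere)
      = 2 * Real.pi ^ ((p : ℝ) / 2) *
          ∑' k : ℕ, ‖x‖ ^ (2 * k) / (4 ^ k * k.factorial * Real.Gamma ((p : ℝ) / 2 + k)) := by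
  have : Nonempty (Fin p) := ⟨⟨0, by omega⟩⟩
  set M : ℕ → ℝ := fun k ↦
    (∫ t : sphere (0 : EuclideanSpace ℝ (Fin p)) 1, ⟪x, (t : EuclideanSpace ℝ (Fin p))⟫ ^ k
      ∂(volume : Measure (EuclideanSpace ℝ (Fin p))).toSphere) / k.factorial
  have hbound : ∀ t : sphere (0 : EuclideanSpace ℝ (Fin p)) 1,
      |⟪x, (t : EuclideanSpace ℝ (Fin p))⟫| ≤ ‖x‖ := fun t ↦ by
    simpa [mem_sphere_zero_iff_norm.1 t.2] using abs_real_inner_le_norm x t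
  have hsupport : M.support ⊆ range (2 * ·) := fun k hk ↦ by
    rcases Nat.even_or_odd' k with ⟨m, rfl | rfl⟩
    · exact ⟨m, rfl⟩
    · exact (hk (by simp only [M, integral_toSphere_inner_pow_of_odd x (odd_two_mul_add_one m),
        zero_div])).elim
  calc _ = ∑' k, M k := integral_exp_eq_tsum
        (continuous_const.inner continuous_subtype_val).aestronglyMeasurable (ae_of_all _ hbound)
    _ = ∑' m, M (2 * m) := ((mul_right_injective₀ two_ne_zero).tsum_eq hsupport).symm
    _ = _ := by
      simp_rw [M, integral_toSphere_inner_pow_two_mul_div_factorial, Fintype.card_fin,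
        tsum_mul_left]
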